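/- arXiv:2004.12790 — 5 statements merged into one kernel-verified Lean document; each statement's English description precedes it below -/
import Mathlib

section
/- Let A be a closed, densely defined linear operator on a complex Hilbert space H with 0 ∈ ρ(A). Then for every ε with 0 < ε < 1/‖A⁻¹‖ and for δ = ‖A⁻¹‖²ε/(1 − ‖A⁻¹‖ε), the ε-pseudospectrum satisfies σ_ε(A) ⊂ (B_δ(W(A⁻¹)))⁻¹. -/
/-!
Write `R = A⁻¹` and `μ = λ⁻¹`. Since `A - λ = λ A (μ - R)`, the resolvent is
`(A - λ)⁻¹ = μ R (μ - R)⁻¹`. If `μ` lies at distance at least `d > 0` from `W(R)`, then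
`|⟨(μ - R) x, x⟩| ≥ d ‖x‖²`, so `μ - R` is invertible with `‖(μ - R)⁻¹‖ ≤ 1 / d` and
`‖(A - λ)⁻¹‖ ≤ |μ| ‖R‖ / d`. When `μ ∉ B_δ(W(R))` one may take `d = max(δ, |μ| - ‖R‖)`, because
`W(R)` lies in the disc of radius `‖R‖`. The value of `δ` is the one with `(‖R‖ + δ) ‖R‖ ε = δ`,
which gives `|μ| ‖R‖ ε ≤ d` both when `|μ| ≤ ‖R‖ + δ` and when `|μ| ≥ ‖R‖ + δ`; hence
`‖(A - λ)⁻¹‖ ≤ 1 / ε` and `λ ∉ σ_ε(A)`.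
-/

open Filter Topology Metric

noncomputable section

variable {H : Type*} [NormedAddCommGroup H] [InnerProductSpace ℂ H] [CompleteSpace H]

/-- `R : H →L[ℂ] H` is a (two-sided, everywhere defined) bounded inverse of `A - lam`,
i.e. `lam` belongs to the resolvent set of `A` with resolvent `R`. -/
def IsResolventAt (A : H →ₗ.[ℂ] H) (lam : ℂ) (R : H →L[ℂ] H) : Prop :=
  (∀ x : A.domain, R (A x - lam • (x : H)) = (x : H)) ∧
  ∀ y : H, ∃ hy : R y ∈ A.domain, A ⟨R y, hy⟩ - lam • R y = y

/-- The resolvent set `ρ(A)` of a (possibly unbounded) operator `A`. -/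
def presolventSet (A : H →ₗ.[ℂ] H) : Set ℂ :=
  {lam | ∃ R, IsResolventAt A lam R}

-- The resolvent operator `(A - lam)⁻¹` (with junk value `0` off the resolvent set).
open scoped Classical in
def resolventOf (A : H →ₗ.[ℂ] H) (lam : ℂ) : H →L[ℂ] H :=
  if h : ∃ R, IsResolventAt A lam R then h.choose else 0

/-- The `ε`-pseudospectrum `σ_ε(A) = {λ : ‖(A-λ)⁻¹‖ > 1/ε}`, where `‖(A-λ)⁻¹‖` is
understood as `∞` for `λ` in the spectrum. -/
def pseudoSpectrum (ε : ℝ) (A : H →ₗ.[ℂ] H) : Set ℂ :=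
  {lam | lam ∉ presolventSet A ∨ 1 / ε < ‖resolventOf A lam‖}

/-- The numerical range `W(T) = {⟨T x, x⟩ : ‖x‖ = 1}` of a bounded operator `T`;
`⟨T x, x⟩` (inner product linear in the first argument) is written as
`inner x (T x)` in the mathlib convention. -/
def numRange (T : H →L[ℂ] H) : Set ℂ :=
  {z | ∃ x : H, ‖x‖ = 1 ∧ z = (inner ℂ x (T x) : ℂ)}

/-- The numerical range of a (possibly unbounded) operator. -/
def pnumRange (A : H →ₗ.[ℂ] H) : Set ℂ :=
  {z | ∃ x : A.domain, ‖(x : H)‖ = 1 ∧ z = (inner ℂ (x : H) (A x) : ℂ)}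

/-- The numerical radius of a bounded operator. -/
def nradius (T : H →L[ℂ] H) : ℝ :=
  sSup ((fun z : ℂ => ‖z‖) '' numRange T)

/-- The numerical range of a bounded operator on a subspace `U` of `H`. -/
def numRangeSub {U : Submodule ℂ H} (T : U →L[ℂ] U) : Set ℂ :=
  {z | ∃ x : U, ‖(x : H)‖ = 1 ∧ z = (inner ℂ (x : H) ((T x : U) : H) : ℂ)}

/-- `B_δ(U) = {z : dist (z, U) < δ}`, the `δ`-neighborhood of a set `U ⊆ ℂ`. -/
def nbhdSet (δ : ℝ) (U : Set ℂ) : Set ℂ :=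
  {z | ∃ u ∈ U, dist z u < δ}

/-- `U⁻¹ = {z⁻¹ : z ∈ U \ {0}}`. -/
def invSet (U : Set ℂ) : Set ℂ :=
  {z | ∃ u ∈ U, u ≠ 0 ∧ z = u⁻¹}

/-- `U + s = {z + s : z ∈ U}`. -/
def shiftSet (U : Set ℂ) (s : ℂ) : Set ℂ :=
  {z | ∃ u ∈ U, z = u + s}

theorem mul_mul_le_max_of_mul_one_sub_eq {r ε δ m : ℝ} (hr : 0 ≤ r) (hε : 0 ≤ ε)
    (hrε : r * ε ≤ 1) (hδ : δ * (1 - r * ε) = r ^ 2 * ε) : m * r * ε ≤ max δ (m - r) := by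
  rcases le_total m (r + δ) with h | h
  · exact le_max_of_le_left (by nlinarith [mul_le_mul_of_nonneg_right h (mul_nonneg hr hε)])
  · exact le_max_of_le_right (by nlinarith [mul_le_mul_of_nonneg_right h (sub_nonneg.2 hrε)])

section

variable {E : Type*} [NormedAddCommGroup E] [InnerProductSpace ℂ E]

theorem norm_le_opNorm_of_mem_numRange {T : E →L[ℂ] E} {w : ℂ} (hw : w ∈ numRange T) :
    ‖w‖ ≤ ‖T‖ := by
  obtain ⟨x, hx, rfl⟩ := hw
  calc ‖inner ℂ x (T x)‖ ≤ ‖x‖ * ‖T x‖ := norm_inner_le_norm _ _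
    _ ≤ ‖x‖ * (‖T‖ * ‖x‖) := by gcongr; exact T.le_opNorm x
    _ = ‖T‖ := by rw [hx]; ring

theorem max_le_dist_numRange_of_notMem_invSet {T : E →L[ℂ] E} {δ : ℝ} {lam : ℂ}
    (hlam : lam ≠ 0) (h : lam ∉ invSet (nbhdSet δ (numRange T))) :
    ∀ w ∈ numRange T, max δ (‖lam⁻¹‖ - ‖T‖) ≤ dist lam⁻¹ w := fun w hw => by
  have hδw : δ ≤ dist lam⁻¹ w := le_of_not_gt fun hlt =>
    h ⟨lam⁻¹, ⟨w, hw, hlt⟩, inv_ne_zero hlam, (inv_inv lam).symm⟩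
  have hTw : ‖lam⁻¹‖ - ‖T‖ ≤ dist lam⁻¹ w := by
    rw [dist_eq_norm]
    linarith [norm_le_opNorm_of_mem_numRange hw, norm_sub_norm_le lam⁻¹ w]
  exact max_le hδw hTw

theorem inner_map_self_div_mem_numRange (T : E →L[ℂ] E) {x : E} (hx : x ≠ 0) :
    inner ℂ x (T x) / (‖x‖ ^ 2 : ℂ) ∈ numRange T := by
  refine ⟨(‖x‖⁻¹ : ℂ) • x, ?_, ?_⟩
  · rw [norm_smul, norm_inv, Complex.norm_real, norm_norm,
      inv_mul_cancel₀ (norm_ne_zero_iff.mpr hx)]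
  · rw [map_smul, inner_smul_left, inner_smul_right, ← Complex.ofReal_inv, Complex.conj_ofReal]
    push_cast
    field_simp

theorem norm_sq_mul_le_norm_inner_of_le_dist_numRange (T : E →L[ℂ] E) {μ : ℂ} {d : ℝ}
    (h : ∀ w ∈ numRange T, d ≤ dist μ w) (x : E) :
    ‖x‖ ^ 2 * d ≤ ‖inner ℂ ((algebraMap ℂ (E →L[ℂ] E) μ - T) x) x‖ := by
  rcases eq_or_ne x 0 with rfl | hx
  · simp
  have hx' : (‖x‖ : ℂ) ≠ 0 := by exact_mod_cast norm_ne_zero_iff.mpr hx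
  have key : inner ℂ x ((algebraMap ℂ (E →L[ℂ] E) μ - T) x)
      = (‖x‖ ^ 2 : ℂ) * (μ - inner ℂ x (T x) / (‖x‖ ^ 2 : ℂ)) := by
    rw [sub_apply, ContinuousLinearMap.algebraMap_apply, inner_sub_right,
      inner_smul_right, inner_self_eq_norm_sq_to_K, RCLike.ofReal_eq_complex_ofReal]
    field_simp
  rw [← norm_inner_symm, key, norm_mul, norm_pow, Complex.norm_real, norm_norm, ← dist_eq_norm]
  exact mul_le_mul_of_nonneg_left (h _ (inner_map_self_div_mem_numRange T hx)) (by positivity)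

theorem notMem_spectrum_of_le_dist_numRange [CompleteSpace E] (T : E →L[ℂ] E) {μ : ℂ} {d : ℝ}
    (hd : 0 < d) (h : ∀ w ∈ numRange T, d ≤ dist μ w) : μ ∉ spectrum ℂ T :=
  spectrum.notMem_iff.mpr <| ContinuousLinearMap.isUnit_of_forall_le_norm_inner_map _
    (c := ⟨d, hd.le⟩) hd (norm_sq_mul_le_norm_inner_of_le_dist_numRange T h)

theorem norm_resolvent_le_of_le_dist_numRange [CompleteSpace E] (T : E →L[ℂ] E) {μ : ℂ}
    {d : ℝ} (hd : 0 < d) (h : ∀ w ∈ numRange T, d ≤ dist μ w) :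
    ‖resolvent T μ‖ ≤ d⁻¹ := by
  lift d to NNReal using hd.le
  set f := algebraMap ℂ (E →L[ℂ] E) μ - T
  have hf : IsUnit f := spectrum.notMem_iff.mp (notMem_spectrum_of_le_dist_numRange T hd h)
  have hanti := ContinuousLinearMap.antilipschitz_of_forall_le_inner_map f hd
    (norm_sq_mul_le_norm_inner_of_le_dist_numRange T h)
  refine ContinuousLinearMap.opNorm_le_bound _ (by positivity) fun y => ?_
  have hy : f (resolvent T μ y) = y := by
    rw [resolvent, ← mul_apply_eq_comp, Ring.mul_inverse_cancel f hf, one_apply_eq_self]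
  have hbound := f.bound_of_antilipschitz hanti (resolvent T μ y)
  rwa [hy, NNReal.coe_inv] at hbound

theorem IsResolventAt.resolventOf_eq {A : E →ₗ.[ℂ] E} {lam : ℂ} {R : E →L[ℂ] E}
    (hR : IsResolventAt A lam R) : resolventOf A lam = R := by
  have hex : ∃ R, IsResolventAt A lam R := ⟨R, hR⟩
  rw [resolventOf, dif_pos hex]
  ext y
  obtain ⟨hy, hAy⟩ := hR.2 y
  simpa [hAy] using hex.choose_spec.1 ⟨R y, hy⟩

theorem IsResolventAt.inv_smul_mul_resolvent {A : E →ₗ.[ℂ] E} {R : E →L[ℂ] E}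
    (hR : IsResolventAt A 0 R) {lam : ℂ} (hlam : lam ≠ 0) (hspec : lam⁻¹ ∉ spectrum ℂ R) :
    IsResolventAt A lam (lam⁻¹ • (R * resolvent R lam⁻¹)) := by
  set μ := lam⁻¹
  set S := resolvent R μ
  have hunit : IsUnit (algebraMap ℂ (E →L[ℂ] E) μ - R) := spectrum.notMem_iff.mp hspec
  have hSleft : ∀ x, μ • S x - S (R x) = x := fun x => by
    simpa [S, resolvent, sub_mul, mul_sub] using congr($(Ring.inverse_mul_cancel _ hunit) x)
  have hSright : ∀ y, μ • S y - R (S y) = y := fun y => by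
    simpa [S, resolvent] using congr($(Ring.mul_inverse_cancel _ hunit) y)
  have hcomm : ∀ y, R (S y) = S (R y) := fun y =>
    sub_right_injective ((hSright y).trans (hSleft y).symm)
  have hlamμ : lam * μ = 1 := mul_inv_cancel₀ hlam
  have hRA : ∀ x : A.domain, R (A x) = x := fun x => by simpa using hR.1 x
  constructor
  · intro x
    calc (μ • (R * S)) (A x - lam • x) = μ • S (R (A x) - lam • R x) := by
          simp [hcomm]
      _ = μ • S x - S (R x) := by
          rw [hRA, map_sub, map_smul, smul_sub, smul_smul, inv_mul_cancel₀ hlam, one_smul]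
      _ = x := hSleft x
  · intro y
    obtain ⟨hz, hAz⟩ := hR.2 (S y)
    have hAz' : A ⟨R (S y), hz⟩ = S y := by simpa using hAz
    refine ⟨A.domain.smul_mem μ hz, ?_⟩
    change A (μ • ⟨R (S y), hz⟩) - lam • μ • R (S y) = y
    rw [A.map_smul, hAz', smul_smul, hlamμ, one_smul, hSright]

theorem IsResolventAt.norm_resolventOf_le_of_le_dist_numRange [CompleteSpace E]
    {A : E →ₗ.[ℂ] E} {R : E →L[ℂ] E} (hR : IsResolventAt A 0 R) {lam : ℂ} (hlam : lam ≠ 0)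
    {d : ℝ} (hd : 0 < d) (h : ∀ w ∈ numRange R, d ≤ dist lam⁻¹ w) :
    lam ∈ presolventSet A ∧ ‖resolventOf A lam‖ ≤ ‖lam⁻¹‖ * ‖R‖ / d := by
  have hres := hR.inv_smul_mul_resolvent hlam (notMem_spectrum_of_le_dist_numRange R hd h)
  refine ⟨⟨_, hres⟩, ?_⟩
  rw [hres.resolventOf_eq, div_eq_mul_inv, mul_assoc]
  calc ‖lam⁻¹ • (R * resolvent R lam⁻¹)‖ ≤ ‖lam⁻¹‖ * (‖R‖ * ‖resolvent R lam⁻¹‖) := by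
        rw [norm_smul]; gcongr; exact norm_mul_le _ _
    _ ≤ ‖lam⁻¹‖ * (‖R‖ * d⁻¹) := by
        gcongr; exact norm_resolvent_le_of_le_dist_numRange R hd h

end

theorem pseudospectrum_subset_inv_nbhd_numRange_general
    (A : H →ₗ.[ℂ] H)
    (h0 : (0 : ℂ) ∈ presolventSet A)
    (ε : ℝ) (hε0 : 0 < ε) (hε : ε < 1 / ‖resolventOf A 0‖)
    (δ : ℝ)
    (hδ : δ = ‖resolventOf A 0‖ ^ 2 * ε / (1 - ‖resolventOf A 0‖ * ε)) :
    pseudoSpectrum ε A ⊆ invSet (nbhdSet δ (numRange (resolventOf A 0))) := by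
  obtain ⟨R, hR⟩ := h0
  rw [hR.resolventOf_eq] at hε hδ ⊢
  have hRpos : 0 < ‖R‖ := by
    by_contra! hR0
    rw [norm_le_zero_iff.mp hR0, norm_zero, div_zero] at hε
    linarith
  have hRε : ‖R‖ * ε < 1 := by rwa [lt_div_iff₀ hRpos, mul_comm] at hε
  have hδ' : δ * (1 - ‖R‖ * ε) = ‖R‖ ^ 2 * ε := by rw [hδ, div_mul_cancel₀ _ (by linarith)]
  have hδpos : 0 < δ := by rw [hδ]; exact div_pos (by positivity) (by linarith)
  intro lam hlam
  by_contra hnot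
  have hlam0 : lam ≠ 0 := by
    rintro rfl
    rcases hlam with h | h
    · exact h ⟨R, hR⟩
    · rw [hR.resolventOf_eq, div_lt_iff₀ hε0] at h
      linarith
  set d := max δ (‖lam⁻¹‖ - ‖R‖)
  have hd : 0 < d := hδpos.trans_le (le_max_left _ _)
  obtain ⟨hmem, hnorm⟩ := hR.norm_resolventOf_le_of_le_dist_numRange hlam0 hd
    (max_le_dist_numRange_of_notMem_invSet hlam0 hnot)
  have hkey : ‖lam⁻¹‖ * ‖R‖ * ε ≤ d :=
    mul_mul_le_max_of_mul_one_sub_eq hRpos.le hε0.le hRε.le hδ'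
  have hbound : ‖resolventOf A lam‖ ≤ 1 / ε :=
    hnorm.trans (by rwa [div_le_div_iff₀ hd hε0, one_mul])
  exact hlam.elim (· hmem) hbound.not_gt

/-- Proposition 2.2. -/
theorem pseudospectrum_subset_inv_nbhd_numRange
    (A : H →ₗ.[ℂ] H)
    (hclosed : IsClosed (A.graph : Set (H × H)))
    (hdense : Dense (A.domain : Set H))
    (h0 : (0 : ℂ) ∈ presolventSet A)
    (ε : ℝ) (hε0 : 0 < ε) (hε : ε < 1 / ‖resolventOf A 0‖)
    (δ : ℝ)
    (hδ : δ = ‖resolventOf A 0‖ ^ 2 * ε / (1 - ‖resolventOf A 0‖ * ε)) :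
    pseudoSpectrum ε A ⊆ invSet (nbhdSet δ (numRange (resolventOf A 0))) :=
  pseudospectrum_subset_inv_nbhd_numRange_general A h0 ε hε0 hε δ hδ
end
end

section
/- Let A be a closed, densely defined linear operator on a complex Hilbert space H and let S ⊂ ρ(A) be such that M := sup_{s∈S} ‖(A−s)⁻¹‖ < ∞. Then for every ε with 0 < ε < 1/M and with δ_s = ‖(A−s)⁻¹‖²ε/(1 − ‖(A−s)⁻¹‖ε) for each s ∈ S, one has σ_ε(A) ⊂ ⋂_{s∈S} [ (B_{δ_s}(W((A−s)⁻¹)))⁻¹ + s ]. -/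
/-!
Write `R = (A - s)⁻¹` and `μ = (λ - s)⁻¹`. If `λ ∈ σ(A)` then `μ ∈ σ(R)`, since otherwise
`μ R (μ - R)⁻¹` inverts `A - λ`; and the spectrum of a bounded operator lies in every neighbourhood
of its numerical range, because away from `W(R)` the form `⟪x, (μ - R) x⟫` is coercive, so `μ - R`
is bounded below and has dense range. If instead `λ ∈ ρ(A)` with `‖(A - λ)⁻¹‖ > 1/ε`, pick `y` with
`‖(A - λ)⁻¹ y‖ > ‖y‖/ε` and put `v = (A - λ)⁻¹ y`. The resolvent identity gives `R v = μ (v - R y)`,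
so the Rayleigh quotient of `R` at `v` lies within `|μ| ‖R‖ ε` of `μ`, and it also gives
`‖(A - λ)⁻¹‖ ≤ ‖R‖ + |λ - s| ‖R‖ ‖(A - λ)⁻¹‖`, which forces `|λ - s| > (1 - ‖R‖ ε) / ‖R‖`.
-/

open Filter Topology Metric

noncomputable section

variable {H : Type*} [NormedAddCommGroup H] [InnerProductSpace ℂ H] [CompleteSpace H]

section BoundedOperator

variable {E : Type*} [NormedAddCommGroup E] [InnerProductSpace ℂ E]

theorem norm_inv_norm_smul {x : E} (hx : x ≠ 0) : ‖(‖x‖ : ℂ)⁻¹ • x‖ = 1 := by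
  exact_mod_cast norm_smul_inv_norm (𝕜 := ℂ) hx

theorem inner_inv_norm_smul_apply (T : E →L[ℂ] E) (x : E) :
    inner ℂ ((‖x‖ : ℂ)⁻¹ • x) (T ((‖x‖ : ℂ)⁻¹ • x)) = inner ℂ x (T x) / (‖x‖ : ℂ) ^ 2 := by
  rw [map_smul, inner_smul_left, inner_smul_right]
  simp only [map_inv₀, Complex.conj_ofReal]
  ring

theorem isUnit_of_le_norm_inner [CompleteSpace E] (T : E →L[ℂ] E) {δ : ℝ} (hδ : 0 < δ)
    (h : ∀ u, ‖u‖ = 1 → δ ≤ ‖inner ℂ u (T u)‖) : IsUnit T := by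
  have hanti : AntilipschitzWith (⟨δ⁻¹, (inv_pos.2 hδ).le⟩ : NNReal) T :=
    antilipschitz_of_bound_of_norm_one T fun u hu => by
      have := (h u hu).trans ((norm_inner_le_norm u (T u)).trans_eq (by rw [hu, one_mul]))
      show 1 ≤ δ⁻¹ * ‖T u‖
      rwa [le_inv_mul_iff₀ hδ, mul_one]
  have hclosed : IsClosed ((LinearMap.range (T : E →ₗ[ℂ] E) : Submodule ℂ E) : Set E) := by
    have : IsClosed (Set.range T) := (hanti.isClosedEmbedding T.uniformContinuous).isClosed_range
    simpa [LinearMap.coe_range] using this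
  have hrange : LinearMap.range (T : E →ₗ[ℂ] E) = ⊤ := by
    have : CompleteSpace (LinearMap.range (T : E →ₗ[ℂ] E)) := hclosed.completeSpace_coe
    rw [← Submodule.orthogonal_eq_bot_iff, Submodule.eq_bot_iff]
    intro y hy
    by_contra hy0
    have hTy : inner ℂ y (T y) = 0 :=
      Submodule.inner_left_of_mem_orthogonal (LinearMap.mem_range_self _ y) hy
    have := h _ (norm_inv_norm_smul hy0)
    rw [inner_inv_norm_smul_apply, hTy, zero_div, norm_zero] at this
    exact this.not_gt hδ
  exact T.isUnit_iff_bijective.2 ⟨hanti.injective, LinearMap.range_eq_top.1 hrange⟩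

theorem spectrum_subset_nbhdSet_numRange [CompleteSpace E] (T : E →L[ℂ] E) {δ : ℝ}
    (hδ : 0 < δ) : spectrum ℂ T ⊆ nbhdSet δ (numRange T) := by
  intro μ hμ
  by_contra hfar
  refine hμ (spectrum.mem_resolventSet_iff.2 (isUnit_of_le_norm_inner _ hδ fun u hu => ?_))
  have : δ ≤ dist μ (inner ℂ u (T u)) := not_lt.1 fun h => hfar ⟨_, ⟨u, hu, rfl⟩, h⟩
  simpa [dist_eq_norm, inner_sub_right, inner_smul_right, hu] using this

end BoundedOperator

theorem mem_shiftSet_invSet {U : Set ℂ} {z s : ℂ} (hz : z - s ≠ 0) (h : (z - s)⁻¹ ∈ U) :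
    z ∈ shiftSet (invSet U) s :=
  ⟨z - s, ⟨(z - s)⁻¹, h, inv_ne_zero hz, (inv_inv _).symm⟩, (sub_add_cancel z s).symm⟩

section Resolvent

variable {E : Type*} [NormedAddCommGroup E] [InnerProductSpace ℂ E] {A : E →ₗ.[ℂ] E}
  {s l : ℂ} {R Rl : E →L[ℂ] E}

theorem isResolventAt_resolventOf (h : l ∈ presolventSet A) :
    IsResolventAt A l (resolventOf A l) := by
  rw [resolventOf, dif_pos (show ∃ R, IsResolventAt A l R from h)]
  exact h.choose_spec

theorem nontrivial_of_notMem_presolventSet (h : l ∉ presolventSet A) : Nontrivial E := by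
  by_contra hE
  rw [not_nontrivial_iff_subsingleton] at hE
  exact h ⟨0, fun _ => Subsingleton.elim _ _, fun _ => ⟨A.domain.zero_mem, Subsingleton.elim _ _⟩⟩

namespace IsResolventAt

theorem norm_pos [Nontrivial E] (hR : IsResolventAt A s R) : 0 < ‖R‖ := by
  refine norm_pos_iff.2 fun h0 => ?_
  obtain ⟨y, hy⟩ := exists_ne (0 : E)
  obtain ⟨hz, e⟩ := hR.2 y
  have : (⟨R y, hz⟩ : A.domain) = 0 := Subtype.ext (by simp [h0])
  rw [this, A.map_zero, h0] at e
  simp only [zero_apply, smul_zero, sub_self] at e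
  exact hy e.symm

theorem apply_sub_smul (hR : IsResolventAt A s R) (l : ℂ) (x : A.domain) :
    R (A x - l • (x : E)) = (x : E) - (l - s) • R x := by
  calc R (A x - l • (x : E)) = R (A x - s • (x : E)) - (l - s) • R x := by
        rw [← map_smul, ← map_sub]; congr 1; module
    _ = (x : E) - (l - s) • R x := by rw [hR.1 x]

theorem sub_smul_apply (hR : IsResolventAt A s R) (l : ℂ) (z : E) :
    ∃ hz : R z ∈ A.domain, A ⟨R z, hz⟩ - l • R z = z - (l - s) • R z := by
  obtain ⟨hz, e⟩ := hR.2 z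
  exact ⟨hz, by calc _ = (A ⟨R z, hz⟩ - s • R z) - (l - s) • R z := by module
    _ = z - (l - s) • R z := by rw [e]⟩

theorem resolvent_identity (hs : IsResolventAt A s R) (hl : IsResolventAt A l Rl) (y : E) :
    Rl y = R y + (l - s) • R (Rl y) := by
  obtain ⟨hz, e⟩ := hl.2 y
  have := hs.apply_sub_smul l ⟨Rl y, hz⟩
  rw [e] at this
  rw [this]
  abel

theorem norm_le (hs : IsResolventAt A s R) (hl : IsResolventAt A l Rl) :
    ‖Rl‖ ≤ ‖R‖ + ‖l - s‖ * ‖R‖ * ‖Rl‖ := by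
  have h : Rl = R + (l - s) • R.comp Rl := ContinuousLinearMap.ext (hs.resolvent_identity hl)
  calc ‖Rl‖ = ‖R + (l - s) • R.comp Rl‖ := congrArg norm h
    _ ≤ ‖R‖ + ‖l - s‖ * (‖R‖ * ‖Rl‖) := by
      grw [norm_add_le, norm_smul, R.opNorm_comp_le Rl]
    _ = ‖R‖ + ‖l - s‖ * ‖R‖ * ‖Rl‖ := by ring

theorem mem_presolventSet (hR : IsResolventAt A s R) (hls : l ≠ s)
    (h : (l - s)⁻¹ ∈ resolventSet ℂ R) : l ∈ presolventSet A := by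
  obtain ⟨U, hU⟩ := spectrum.mem_resolventSet_iff.1 h
  set μ := (l - s)⁻¹
  have hμ : (l - s) * μ = 1 := mul_inv_cancel₀ (sub_ne_zero.2 hls)
  set W : E →L[ℂ] E := ↑U⁻¹
  have hcomm : Commute R W := Commute.units_inv_right
    (hU ▸ (Algebra.commute_algebraMap_right μ R).sub_right (Commute.refl R))
  have hUW : ∀ z, (algebraMap ℂ _ μ - R) (W z) = z := fun z => by
    rw [← hU]; exact DFunLike.congr_fun U.mul_inv z
  have hWU : ∀ z, W ((algebraMap ℂ _ μ - R) z) = z := fun z => by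
    rw [← hU]; exact DFunLike.congr_fun U.inv_mul z
  refine ⟨R.comp (μ • W), fun x => ?_, fun y => ?_⟩
  · calc R (μ • W (A x - l • (x : E))) = μ • W (R (A x - l • (x : E))) := by
          rw [map_smul]
          exact congrArg (fun T : E →L[ℂ] E => μ • T (A x - l • (x : E))) hcomm.eq
      _ = μ • W ((l - s) • (algebraMap ℂ _ μ - R) x) := by
          rw [hR.apply_sub_smul]
          simp [smul_sub, smul_smul, hμ]
      _ = x := by rw [map_smul, hWU, smul_smul, mul_comm, hμ, one_smul]
  · obtain ⟨hz, e⟩ := hR.sub_smul_apply l ((μ • W) y)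
    refine ⟨hz, e.trans ?_⟩
    calc (μ • W) y - (l - s) • R ((μ • W) y) = (algebraMap ℂ _ μ - R) (W y) := by
          simp [map_smul, smul_smul, hμ]
      _ = y := hUW y

theorem inv_sub_mem_spectrum (hR : IsResolventAt A s R) (hl : l ∉ presolventSet A) :
    (l - s)⁻¹ ∈ spectrum ℂ R := fun h =>
  hl (hR.mem_presolventSet (by rintro rfl; exact hl ⟨R, hR⟩) h)

theorem exists_dist_inv_sub_le (hs : IsResolventAt A s R) (hl : IsResolventAt A l Rl)
    (hls : l ≠ s) (y : E) (hy : Rl y ≠ 0) :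
    ∃ z ∈ numRange R, dist (l - s)⁻¹ z ≤ ‖R‖ * ‖y‖ / (‖l - s‖ * ‖Rl y‖) := by
  set v := Rl y
  have hRv : R v = (l - s)⁻¹ • (v - R y) := by
    rw [sub_eq_iff_eq_add'.2 (hs.resolvent_identity hl y), smul_smul,
      inv_mul_cancel₀ (sub_ne_zero.2 hls), one_smul]
  have hv : (‖v‖ : ℂ) ≠ 0 := Complex.ofReal_ne_zero.2 (norm_ne_zero_iff.2 hy)
  refine ⟨_, ⟨_, norm_inv_norm_smul hy, rfl⟩, ?_⟩
  have hdiff : (l - s)⁻¹ - inner ℂ ((‖v‖ : ℂ)⁻¹ • v) (R ((‖v‖ : ℂ)⁻¹ • v)) =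
      (l - s)⁻¹ * inner ℂ v (R y) / (‖v‖ : ℂ) ^ 2 := by
    rw [inner_inv_norm_smul_apply, hRv, inner_smul_right, inner_sub_right,
      inner_self_eq_norm_sq_to_K]
    field_simp
    simp
  rw [dist_eq_norm, hdiff, norm_div, norm_mul, norm_inv, norm_pow, Complex.norm_real, norm_norm]
  calc ‖l - s‖⁻¹ * ‖inner ℂ v (R y)‖ / ‖v‖ ^ 2
      ≤ ‖l - s‖⁻¹ * (‖v‖ * (‖R‖ * ‖y‖)) / ‖v‖ ^ 2 := by
        gcongr
        exact (norm_inner_le_norm _ _).trans (by gcongr; exact R.le_opNorm y)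
    _ = ‖R‖ * ‖y‖ / (‖l - s‖ * ‖v‖) := by
        field_simp

theorem inv_sub_mem_nbhdSet_numRange (hs : IsResolventAt A s R) (hl : IsResolventAt A l Rl)
    (hls : l ≠ s) {ε : ℝ} (hε : 0 < ε) (hRε : ‖R‖ * ε < 1) (hRl : 1 / ε < ‖Rl‖) :
    (l - s)⁻¹ ∈ nbhdSet (‖R‖ ^ 2 * ε / (1 - ‖R‖ * ε)) (numRange R) := by
  obtain ⟨y, hy1, hy⟩ := Rl.exists_lt_apply_of_lt_opNorm hRl
  have hRly : 0 < ‖Rl y‖ := (one_div_pos.2 hε).trans hy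
  obtain ⟨z, hz, hdist⟩ := hs.exists_dist_inv_sub_le hl hls y (norm_pos_iff.1 hRly)
  refine ⟨z, hz, hdist.trans_lt ?_⟩
  have hnorm := hs.norm_le hl
  have hεRl : 1 < ε * ‖Rl‖ := by rwa [div_lt_iff₀ hε, mul_comm] at hRl
  have hR : 0 < ‖R‖ := by
    by_contra! h
    rw [le_antisymm h (norm_nonneg R)] at hnorm
    nlinarith
  have hc : 1 - ‖R‖ * ε < ‖l - s‖ * ‖R‖ := by
    by_contra! h
    nlinarith [mul_le_mul_of_nonneg_right h (norm_nonneg Rl), mul_pos hR (sub_pos.2 hεRl)]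
  have hls' : 0 < ‖l - s‖ := norm_pos_iff.2 (sub_ne_zero.2 hls)
  have hyε : ‖y‖ < ε * ‖Rl y‖ := hy1.trans (by rwa [div_lt_iff₀ hε, mul_comm] at hy)
  calc ‖R‖ * ‖y‖ / (‖l - s‖ * ‖Rl y‖) < ‖R‖ * ε / ‖l - s‖ := by
        rw [div_lt_div_iff₀ (by positivity) hls']
        nlinarith [mul_lt_mul_of_pos_left hyε (mul_pos hR hls')]
    _ < ‖R‖ ^ 2 * ε / (1 - ‖R‖ * ε) := by
        rw [div_lt_div_iff₀ hls' (by linarith)]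
        nlinarith [mul_lt_mul_of_pos_left hc (mul_pos hR hε)]

end IsResolventAt

end Resolvent

theorem pseudospectrum_subset_iInter_shifted_general
    (A : H →ₗ.[ℂ] H)
    (S : Set ℂ) (hS : S ⊆ presolventSet A)
    (hbdd : BddAbove ((fun s => ‖resolventOf A s‖) '' S))
    (ε : ℝ) (hε0 : 0 < ε)
    (hε : ε < 1 / sSup ((fun s => ‖resolventOf A s‖) '' S)) :
    pseudoSpectrum ε A ⊆
      ⋂ s ∈ S,
        shiftSet
          (invSet (nbhdSet
            (‖resolventOf A s‖ ^ 2 * ε / (1 - ‖resolventOf A s‖ * ε))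
            (numRange (resolventOf A s)))) s := by
  intro l hl
  refine Set.mem_iInter₂.2 fun s hs => ?_
  set R := resolventOf A s
  have hR : IsResolventAt A s R := isResolventAt_resolventOf (hS hs)
  have hRε : ‖R‖ * ε < 1 := by
    set M := sSup ((fun s => ‖resolventOf A s‖) '' S)
    have hM : 0 < M := by
      by_contra! h
      exact (one_div_nonpos.2 h).not_gt (hε0.trans hε)
    calc ‖R‖ * ε ≤ M * ε := by gcongr; exact le_csSup hbdd ⟨s, hs, rfl⟩
      _ < 1 := by rwa [lt_div_iff₀ hM, mul_comm] at hε
  have hls : l ≠ s := by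
    rintro rfl
    rcases hl with h | h
    · exact h (hS hs)
    · exact h.not_gt ((lt_div_iff₀ hε0).2 hRε)
  refine mem_shiftSet_invSet (sub_ne_zero.2 hls) ?_
  by_cases hρ : l ∈ presolventSet A
  · exact hR.inv_sub_mem_nbhdSet_numRange (isResolventAt_resolventOf hρ) hls hε0 hRε
      (hl.resolve_left (not_not.2 hρ))
  · have : Nontrivial H := nontrivial_of_notMem_presolventSet hρ
    have := hR.norm_pos
    exact spectrum_subset_nbhdSet_numRange R (by positivity) (hR.inv_sub_mem_spectrum hρ)

/-- Theorem 2.3. -/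
theorem pseudospectrum_subset_iInter_shifted
    (A : H →ₗ.[ℂ] H)
    (hclosed : IsClosed (A.graph : Set (H × H)))
    (hdense : Dense (A.domain : Set H))
    (S : Set ℂ) (hS : S ⊆ presolventSet A)
    (hbdd : BddAbove ((fun s => ‖resolventOf A s‖) '' S))
    (ε : ℝ) (hε0 : 0 < ε)
    (hε : ε < 1 / sSup ((fun s => ‖resolventOf A s‖) '' S)) :
    pseudoSpectrum ε A ⊆
      ⋂ s ∈ S,
        shiftSet
          (invSet (nbhdSet
            (‖resolventOf A s‖ ^ 2 * ε / (1 - ‖resolventOf A s‖ * ε))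
            (numRange (resolventOf A s)))) s :=
  pseudospectrum_subset_iInter_shifted_general A S hS hbdd ε hε0 hε
end
end

section
/- Let A be a closed, densely defined linear operator on a complex Hilbert space H. For s ∈ ρ(A), 0 < ε < 1/‖(A−s)⁻¹‖, δ_s = ‖(A−s)⁻¹‖²ε/(1 − ‖(A−s)⁻¹‖ε) and ρ_s = 1/(w((A−s)⁻¹) + δ_s), the closed ball of radius ρ_s centered at s is disjoint from the set (B_{δ_s}(W((A−s)⁻¹)))⁻¹ + s; moreover ρ_s ≥ 1/(‖(A−s)⁻¹‖ + δ_s). -/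
open Filter Topology Metric

noncomputable section

variable {H : Type*} [NormedAddCommGroup H] [InnerProductSpace ℂ H] [CompleteSpace H]

/-! Every point of `B_δ(W(T))` has modulus `< w(T) + δ`, so the inverse of such a point, shifted by
`s`, lies at distance `> 1 / (w(T) + δ) = ρ` from `s`. The lower bound on `ρ` is `w(T) ≤ ‖T‖`. -/

section NumericalRange

variable {E : Type*} [NormedAddCommGroup E] [InnerProductSpace ℂ E] (T : E →L[ℂ] E)

theorem norm_le_opNorm_of_mem_numRange_s2 {z : ℂ} (hz : z ∈ numRange T) : ‖z‖ ≤ ‖T‖ := by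
  obtain ⟨x, hx, rfl⟩ := hz
  calc ‖inner ℂ x (T x)‖ ≤ ‖x‖ * ‖T x‖ := norm_inner_le_norm x (T x)
    _ ≤ ‖x‖ * (‖T‖ * ‖x‖) := by gcongr; exact T.le_opNorm x
    _ = ‖T‖ := by rw [hx, one_mul, mul_one]

theorem norm_le_nradius_of_mem_numRange {z : ℂ} (hz : z ∈ numRange T) : ‖z‖ ≤ nradius T :=
  le_csSup ⟨‖T‖, by rintro _ ⟨u, hu, rfl⟩; exact norm_le_opNorm_of_mem_numRange_s2 T hu⟩ ⟨z, hz, rfl⟩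

theorem nradius_nonneg : 0 ≤ nradius T :=
  Real.sSup_nonneg (by rintro _ ⟨z, -, rfl⟩; exact norm_nonneg z)

theorem nradius_le_opNorm : nradius T ≤ ‖T‖ :=
  Real.sSup_le (by rintro _ ⟨z, hz, rfl⟩; exact norm_le_opNorm_of_mem_numRange_s2 T hz) (norm_nonneg T)

theorem one_div_opNorm_add_le_one_div_nradius_add {δ : ℝ} (hδ : 0 < δ) :
    1 / (‖T‖ + δ) ≤ 1 / (nradius T + δ) :=
  one_div_le_one_div_of_le (by linarith [nradius_nonneg T]) (by linarith [nradius_le_opNorm T])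

end NumericalRange

theorem norm_lt_of_mem_nbhdSet {U : Set ℂ} {w δ : ℝ} (hU : ∀ u ∈ U, ‖u‖ ≤ w) {z : ℂ}
    (hz : z ∈ nbhdSet δ U) : ‖z‖ < w + δ := by
  obtain ⟨u, hu, hzu⟩ := hz
  calc ‖z‖ ≤ ‖u‖ + dist z u := by rw [dist_eq_norm]; exact norm_le_insert' z u
    _ < w + δ := add_lt_add_of_le_of_lt (hU u hu) hzu

theorem closedBall_inv_inter_shiftSet_invSet_eq_empty {V : Set ℂ} {r : ℝ} (hV : ∀ v ∈ V, ‖v‖ < r)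
    (s : ℂ) : closedBall s r⁻¹ ∩ shiftSet (invSet V) s = ∅ := by
  refine Set.eq_empty_iff_forall_notMem.mpr ?_
  rintro _ ⟨hball, _, ⟨v, hv, hv0, rfl⟩, rfl⟩
  rw [mem_closedBall, dist_add_self_left, norm_inv] at hball
  exact hball.not_gt (inv_strictAnti₀ (norm_pos_iff.mpr hv0) (hV v hv))

theorem closedBall_disjoint_shifted_inv_nbhd_numRange_general
    (A : H →ₗ.[ℂ] H)
    (s : ℂ)
    (ε : ℝ) (hε0 : 0 < ε) (hε : ε < 1 / ‖resolventOf A s‖)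
    (δ : ℝ)
    (hδ : δ = ‖resolventOf A s‖ ^ 2 * ε / (1 - ‖resolventOf A s‖ * ε))
    (ρ : ℝ) (hρ : ρ = 1 / (nradius (resolventOf A s) + δ)) :
    Metric.closedBall s ρ ∩
        shiftSet (invSet (nbhdSet δ (numRange (resolventOf A s)))) s = ∅ ∧
      1 / (‖resolventOf A s‖ + δ) ≤ ρ := by
  set R := resolventOf A s
  have hR : 0 < ‖R‖ := by
    refine (norm_nonneg R).lt_of_ne fun h => ?_
    rw [← h, div_zero] at hε
    linarith
  have hδ0 : 0 < δ := by
    have hRε : ‖R‖ * ε < 1 := by rwa [lt_div_iff₀ hR, mul_comm] at hε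
    rw [hδ]
    exact div_pos (by positivity) (by linarith)
  subst hρ
  refine ⟨?_, one_div_opNorm_add_le_one_div_nradius_add R hδ0⟩
  rw [one_div]
  exact closedBall_inv_inter_shiftSet_invSet_eq_empty
    (fun v hv => norm_lt_of_mem_nbhdSet (fun _ => norm_le_nradius_of_mem_numRange R) hv) s

/-- Proposition 2.5. -/
theorem closedBall_disjoint_shifted_inv_nbhd_numRange
    (A : H →ₗ.[ℂ] H)
    (hclosed : IsClosed (A.graph : Set (H × H)))
    (hdense : Dense (A.domain : Set H))
    (s : ℂ) (hs : s ∈ presolventSet A)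
    (ε : ℝ) (hε0 : 0 < ε) (hε : ε < 1 / ‖resolventOf A s‖)
    (δ : ℝ)
    (hδ : δ = ‖resolventOf A s‖ ^ 2 * ε / (1 - ‖resolventOf A s‖ * ε))
    (ρ : ℝ) (hρ : ρ = 1 / (nradius (resolventOf A s) + δ)) :
    Metric.closedBall s ρ ∩
        shiftSet (invSet (nbhdSet δ (numRange (resolventOf A s)))) s = ∅ ∧
      1 / (‖resolventOf A s‖ + δ) ≤ ρ :=
  closedBall_disjoint_shifted_inv_nbhd_numRange_general A s ε hε0 hε δ hδ ρ hρ
end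
end

section
/- Let A be a closed, densely defined linear operator on a complex Hilbert space H with 0 ∈ ρ(A), and suppose the family (P_n, A_n)_{n∈ℕ} approximates A strongly. Then for every x ∈ H with ‖x‖ = 1 there exists a sequence y_n ∈ U_n with ‖y_n‖ = 1 (defined for all sufficiently large n) such that ⟨A_n⁻¹ y_n, y_n⟩ → ⟨A⁻¹ x, x⟩. -/
/-!
Take `y_n = P_n x / ‖P_n x‖`, which is a unit vector as soon as `P_n x ≠ 0`, i.e. eventually.
Since the normalising factor is real, `⟨A_n⁻¹ y_n, y_n⟩ = ‖P_n x‖⁻² ⟨A_n⁻¹ P_n x, P_n x⟩`,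
and this tends to `⟨A⁻¹ x, x⟩` because `P_n x → x`, `‖P_n x‖ → ‖x‖ = 1` and `A_n⁻¹ P_n x → A⁻¹ x`.
-/

open Filter Topology Metric

noncomputable section

variable {H : Type*} [NormedAddCommGroup H] [InnerProductSpace ℂ H] [CompleteSpace H]

section Normalization

variable {𝕜 E : Type*} [RCLike 𝕜] [NormedAddCommGroup E] [InnerProductSpace 𝕜 E]

lemma inner_ofReal_smul_apply_ofReal_smul {F : Submodule 𝕜 E} (S : F →L[𝕜] F) (r : ℝ) (u : F) :
    inner 𝕜 (((r : 𝕜) • u : F) : E) (S ((r : 𝕜) • u) : E) =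
      r * (r * inner 𝕜 (u : E) (S u : E)) := by
  simp only [map_smul, Submodule.coe_smul, inner_smul_left, inner_smul_right, RCLike.conj_ofReal]

lemma tendsto_inner_normalize_apply {ι : Type*} {l : Filter ι} {F : ι → Submodule 𝕜 E}
    {S : ∀ i, F i →L[𝕜] F i} {p : ∀ i, F i} {x z : E} (hx : ‖x‖ = 1)
    (hp : Tendsto (fun i => (p i : E)) l (𝓝 x))
    (hS : Tendsto (fun i => (S i (p i) : E)) l (𝓝 z)) :
    Tendsto (fun i => inner 𝕜 (((‖(p i : E)‖⁻¹ : 𝕜) • p i : F i) : E)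
      (S i ((‖(p i : E)‖⁻¹ : 𝕜) • p i) : E)) l (𝓝 (inner 𝕜 x z)) := by
  have hc : Tendsto (fun i => ((‖(p i : E)‖⁻¹ : ℝ) : 𝕜)) l (𝓝 1) := by
    simpa [hx, Function.comp_def] using
      ((RCLike.continuous_ofReal (K := 𝕜)).tendsto _).comp (hp.norm.inv₀ (by simp [hx]))
  simp_rw [← RCLike.ofReal_inv, inner_ofReal_smul_apply_ofReal_smul]
  simpa using hc.mul (hc.mul (hp.inner hS))

end Normalization

theorem numRange_inv_pointwise_approx_general
    (A : H →ₗ.[ℂ] H)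
    (U : ℕ → Submodule ℂ H)
    (P : ℕ → H →L[ℂ] H)
    (hPmem : ∀ n x, P n x ∈ U n)
    (hPconv : ∀ x : H, Tendsto (fun n => P n x) atTop (𝓝 x))
    (Tinv : ∀ n, ↥(U n) →L[ℂ] ↥(U n))
    (happrox : ∀ x : H,
      Tendsto (fun n => (↑(Tinv n ⟨P n x, hPmem n x⟩) : H)) atTop
        (𝓝 (resolventOf A 0 x)))
    :
    ∀ x : H, ‖x‖ = 1 →
      ∃ (N : ℕ) (y : ∀ n, ↥(U n)),
        (∀ n ≥ N, ‖((y n : U n) : H)‖ = 1) ∧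
          Tendsto (fun n => (inner ℂ ((y n : U n) : H) (↑(Tinv n (y n)) : H) : ℂ))
            atTop (𝓝 (inner ℂ x (resolventOf A 0 x) : ℂ)) := by
  intro x hx
  let p : ∀ n, U n := fun n => ⟨P n x, hPmem n x⟩
  have hp : Tendsto (fun n => (p n : H)) atTop (𝓝 x) := hPconv x
  obtain ⟨N, hN⟩ := eventually_atTop.1 (hp.eventually_ne (norm_ne_zero_iff.1 (by simp [hx])))
  refine ⟨N, fun n => (‖(p n : H)‖⁻¹ : ℂ) • p n, fun n hn => ?_, ?_⟩
  · exact norm_smul_inv_norm (hN n hn)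
  · exact tendsto_inner_normalize_apply hx hp (happrox x)

/-- Lemma 3.4(a). -/
theorem numRange_inv_pointwise_approx
    (A : H →ₗ.[ℂ] H)
    (hclosed : IsClosed (A.graph : Set (H × H)))
    (hdense : Dense (A.domain : Set H))
    (h0 : (0 : ℂ) ∈ presolventSet A)
    (U : ℕ → Submodule ℂ H) (hUfin : ∀ n, FiniteDimensional ℂ (U n))
    (P : ℕ → H →L[ℂ] H)
    (hPmem : ∀ n x, P n x ∈ U n)
    (hPproj : ∀ n, ∀ x ∈ U n, P n x = x)
    (hPconv : ∀ x : H, Tendsto (fun n => P n x) atTop (𝓝 x))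
    (T : ∀ n, ↥(U n) →L[ℂ] ↥(U n)) (Tinv : ∀ n, ↥(U n) →L[ℂ] ↥(U n))
    (hTinv : ∀ n, (∀ u, Tinv n (T n u) = u) ∧ ∀ u, T n (Tinv n u) = u)
    (happrox : ∀ x : H,
      Tendsto (fun n => (↑(Tinv n ⟨P n x, hPmem n x⟩) : H)) atTop
        (𝓝 (resolventOf A 0 x)))
    :
    ∀ x : H, ‖x‖ = 1 →
      ∃ (N : ℕ) (y : ∀ n, ↥(U n)),
        (∀ n ≥ N, ‖((y n : U n) : H)‖ = 1) ∧
          Tendsto (fun n => (inner ℂ ((y n : U n) : H) (↑(Tinv n (y n)) : H) : ℂ))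
            atTop (𝓝 (inner ℂ x (resolventOf A 0 x) : ℂ)) :=
  numRange_inv_pointwise_approx_general A U P hPmem hPconv Tinv happrox
end
end

section
/- Let A be a closed, densely defined operator on a complex Hilbert space H with 0 ∈ ρ(A) and D(A) ⊂ W ⊂ H for a continuously and densely embedded Hilbert space W, and suppose (P_n, A_n)_{n∈ℕ} approximates A uniformly. Let C₀ = sup_n (‖A_n⁻¹‖‖P_n‖ + 6‖A_n⁻¹‖‖P_n‖²), r > 0, 0 < ε < 1/‖A⁻¹‖ and ‖A⁻¹‖²ε/(1 − ‖A⁻¹‖ε) < δ ≤ ‖A⁻¹‖²ε/(1 − ‖A⁻¹‖ε) + (7/2)‖A⁻¹‖. If n₀ ∈ ℕ is such that for every n ≥ n₀, ‖A⁻¹ − A_n⁻¹P_n‖ + (r+ε)‖A⁻¹‖_{L(H,W)}·C₀·‖(I−P_n)|_W‖_{L(W,H)} < δ − ‖A⁻¹‖²ε/(1 − ‖A⁻¹‖ε), then σ_ε(A) ∩ {z : |z| ≤ r} ⊂ (B_δ(W(A_n⁻¹)))⁻¹ for all n ≥ n₀. -/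
open Filter Topology Metric

noncomputable section

variable {H : Type*} [NormedAddCommGroup H] [InnerProductSpace ℂ H] [CompleteSpace H]

/-!
Write `B = A⁻¹` and `S_n = A_n⁻¹ P_n`. Since `B` is the norm limit of the finite-rank operators
`S_n`, it is compact. If `λ ∉ ρ(A)`, the Fredholm alternative makes `λ⁻¹` an eigenvalue of `B`;
if `‖(A - λ)⁻¹‖ > 1/ε`, the resolvent identity `(A - λ)⁻¹ = B + λ B (A - λ)⁻¹` turns a vector
nearly attaining that norm into an approximate eigenvector. Either way there is a unit vector
`x = B z` with `‖z‖ ≤ r + ε` and `|⟨B x, x⟩ - λ⁻¹| ≤ ‖B‖²ε/(1 - ‖B‖ε)`. Since `x` lies in the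
range of `B`, hence in `W`, it is `(r + ε)‖A⁻¹‖_{L(H,W)}‖(I - P_n)|_W‖`-close to `U_n`, and the
normalisation of `P_n x` is a unit vector of `U_n` whose Rayleigh quotient for `A_n⁻¹` is close
to `⟨B x, x⟩`. The crude estimate `C₀ ≥ 7‖B‖` takes care of the case `P_n x = 0`.
-/

section NormedSpace

variable {𝕜 E : Type*} [RCLike 𝕜] [NormedAddCommGroup E] [NormedSpace 𝕜 E]

theorem ContinuousLinearMap.isCompactOperator_of_mem_finiteDimensional {V : Submodule 𝕜 E}
    [FiniteDimensional 𝕜 V] (f : E →L[𝕜] E) (hf : ∀ x, f x ∈ V) : IsCompactOperator f :=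
  (isCompactOperator_of_locallyCompactSpace_dom (f.codRestrict V hf)).clm_comp V.subtypeL

theorem exists_norm_eq_one_of_approx_eigenvector {B : E →L[𝕜] E} {μ : 𝕜} {a b : ℝ} {z ζ : E}
    (hζ : ζ ≠ 0) (hz : B z = ζ) (hza : ‖z‖ ≤ a * ‖ζ‖) (hζb : ‖B ζ - μ • ζ‖ ≤ b * ‖ζ‖) :
    ∃ x z, ‖x‖ = 1 ∧ B z = x ∧ ‖z‖ ≤ a ∧ ‖B x - μ • x‖ ≤ b := by
  have hζ0 : 0 < ‖ζ‖ := norm_pos_iff.2 hζ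
  have hnorm (w : E) : ‖(‖ζ‖⁻¹ : 𝕜) • w‖ = ‖w‖ / ‖ζ‖ := by
    rw [norm_smul, norm_inv, RCLike.norm_ofReal, abs_of_pos hζ0, inv_mul_eq_div]
  refine ⟨(‖ζ‖⁻¹ : 𝕜) • ζ, (‖ζ‖⁻¹ : 𝕜) • z, norm_smul_inv_norm hζ, by rw [map_smul, hz], ?_, ?_⟩
  · rwa [hnorm, div_le_iff₀ hζ0]
  · rwa [map_smul, smul_comm, ← smul_sub, hnorm, div_le_iff₀ hζ0]

end NormedSpace

section InnerProductSpace

variable {𝕜 E : Type*} [RCLike 𝕜] [NormedAddCommGroup E] [InnerProductSpace 𝕜 E]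

theorem norm_inner_apply_le (M : E →L[𝕜] E) {x : E} (hx : ‖x‖ = 1) :
    ‖inner 𝕜 x (M x)‖ ≤ ‖M‖ :=
  (norm_inner_le_norm x (M x)).trans_eq (by rw [hx, one_mul]) |>.trans (M.unit_le_opNorm x hx.le)

theorem norm_inner_apply_sub_le {B : E →L[𝕜] E} {x : E} (hx : ‖x‖ = 1) (μ : 𝕜) :
    ‖inner 𝕜 x (B x) - μ‖ ≤ ‖B x - μ • x‖ := by
  have : inner 𝕜 x (B x) - μ = inner 𝕜 x (B x - μ • x) := by
    rw [inner_sub_right, inner_smul_right, inner_self_eq_norm_sq_to_K, hx]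
    simp
  rw [this]
  simpa [hx] using norm_inner_le_norm (𝕜 := 𝕜) x (B x - μ • x)

theorem norm_sub_smul_inv_norm_le {x q : E} (hx : ‖x‖ = 1) (hq : q ≠ 0) :
    ‖q - (‖q‖⁻¹ : 𝕜) • q‖ ≤ ‖x - q‖ := by
  have hq0 : 0 < ‖q‖ := norm_pos_iff.2 hq
  have hcoef : (1 - (‖q‖⁻¹ : 𝕜)) = ((1 - ‖q‖⁻¹ : ℝ) : 𝕜) := by push_cast; rfl
  calc ‖q - (‖q‖⁻¹ : 𝕜) • q‖ = ‖((1 - ‖q‖⁻¹ : ℝ) : 𝕜) • q‖ := by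
        rw [← hcoef, sub_smul, one_smul]
    _ = |1 - ‖q‖⁻¹| * |‖q‖| := by rw [norm_smul, RCLike.norm_ofReal, abs_norm]
    _ = |‖q‖ - 1| := by rw [← abs_mul, sub_mul, one_mul, inv_mul_cancel₀ hq0.ne']
    _ ≤ ‖x - q‖ := by simpa [hx, norm_sub_rev] using abs_norm_sub_norm_le q x

theorem norm_inner_sub_inner_smul_inv_norm_le (M : E →L[𝕜] E) {x q : E} (hx : ‖x‖ = 1)
    (hq : q ≠ 0) :
    ‖inner 𝕜 x (M q) - inner 𝕜 ((‖q‖⁻¹ : 𝕜) • q) (M ((‖q‖⁻¹ : 𝕜) • q))‖ ≤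
      ‖M‖ * ‖x - q‖ * (2 * ‖q‖ + 1) := by
  set y := (‖q‖⁻¹ : 𝕜) • q
  have hy : ‖y‖ = 1 := norm_smul_inv_norm hq
  have hqy : ‖q - y‖ ≤ ‖x - q‖ := norm_sub_smul_inv_norm_le hx hq
  have hxy : ‖x - y‖ ≤ 2 * ‖x - q‖ := by
    linarith [norm_sub_le_norm_sub_add_norm_sub x q y]
  have hsplit : inner 𝕜 x (M q) - inner 𝕜 y (M y) =
      inner 𝕜 (x - y) (M q) + inner 𝕜 y (M (q - y)) := by
    rw [inner_sub_left, map_sub, inner_sub_right]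
    ring
  rw [hsplit]
  calc ‖inner 𝕜 (x - y) (M q) + inner 𝕜 y (M (q - y))‖
      ≤ ‖x - y‖ * (‖M‖ * ‖q‖) + ‖y‖ * (‖M‖ * ‖q - y‖) := by
        refine (norm_add_le _ _).trans (add_le_add ?_ ?_) <;>
        exact (norm_inner_le_norm _ _).trans (by gcongr; exact M.le_opNorm _)
    _ ≤ 2 * ‖x - q‖ * (‖M‖ * ‖q‖) + 1 * (‖M‖ * ‖x - q‖) := by
        rw [hy]
        gcongr
    _ = ‖M‖ * ‖x - q‖ * (2 * ‖q‖ + 1) := by ring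

end InnerProductSpace

section Resolvent

variable {E : Type*} [NormedAddCommGroup E] [InnerProductSpace ℂ E]

theorem resolventOf_spec {A : E →ₗ.[ℂ] E} {lam : ℂ} (h : lam ∈ presolventSet A) :
    IsResolventAt A lam (resolventOf A lam) := by
  rw [resolventOf, dif_pos (show ∃ R, IsResolventAt A lam R from h)]
  exact h.choose_spec

namespace IsResolventAt

variable {A : E →ₗ.[ℂ] E} {B R : E →L[ℂ] E} {lam : ℂ}

theorem apply_apply (hB : IsResolventAt A 0 B) (x : A.domain) : B (A x) = x := by
  simpa using hB.1 x

theorem exists_apply_eq (hB : IsResolventAt A 0 B) (y : E) :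
    ∃ hy : B y ∈ A.domain, A ⟨B y, hy⟩ = y := by
  simpa using hB.2 y

/-- `(A - λ)⁻¹ = B (1 - λ B)⁻¹`. -/
theorem mem_presolventSet_of_isUnit (hB : IsResolventAt A 0 B) (h : IsUnit (1 - lam • B)) :
    lam ∈ presolventSet A := by
  obtain ⟨u, hu⟩ := h
  have hinv (y : E) : (1 - lam • B) ((↑u⁻¹ : E →L[ℂ] E) y) = y := by
    simpa [hu] using DFunLike.congr_fun u.mul_inv y
  have hinv' (y : E) : (↑u⁻¹ : E →L[ℂ] E) ((1 - lam • B) y) = y := by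
    simpa [hu] using DFunLike.congr_fun u.inv_mul y
  refine ⟨B.comp (↑u⁻¹ : E →L[ℂ] E), fun x => ?_, fun y => ?_⟩
  · have : (A x : E) - lam • (x : E) = (1 - lam • B) (A x) := by simp [hB.apply_apply]
    rw [ContinuousLinearMap.comp_apply, this, hinv', hB.apply_apply]
  · obtain ⟨hy, hAy⟩ := hB.exists_apply_eq ((↑u⁻¹ : E →L[ℂ] E) y)
    refine ⟨hy, ?_⟩
    conv_rhs => rw [← hinv y]
    simp [hAy]

theorem apply_eq_add (hB : IsResolventAt A 0 B) (hR : IsResolventAt A lam R) (y : E) :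
    R y = B y + lam • B (R y) := by
  obtain ⟨hy, hAy⟩ := hR.2 y
  rw [← map_smul, ← map_add, ← sub_eq_iff_eq_add.1 hAy, hB.apply_apply]

theorem norm_le_s18 (hB : IsResolventAt A 0 B) (hR : IsResolventAt A lam R) :
    ‖R‖ ≤ ‖B‖ + ‖lam‖ * ‖B‖ * ‖R‖ := by
  refine R.opNorm_le_bound (by positivity) fun y => ?_
  calc ‖R y‖ = ‖B y + lam • B (R y)‖ := by rw [← hB.apply_eq_add hR]
    _ ≤ ‖B‖ * ‖y‖ + ‖lam‖ * (‖B‖ * (‖R‖ * ‖y‖)) := by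
        refine (norm_add_le _ _).trans (add_le_add (B.le_opNorm y) ?_)
        rw [norm_smul]
        gcongr
        exact (B.le_opNorm _).trans (by gcongr; exact R.le_opNorm y)
    _ = (‖B‖ + ‖lam‖ * ‖B‖ * ‖R‖) * ‖y‖ := by ring

end IsResolventAt

end Resolvent

section Pseudospectrum

variable {E : Type*} [NormedAddCommGroup E] [InnerProductSpace ℂ E]
  {A : E →ₗ.[ℂ] E} {B R : E →L[ℂ] E} {lam : ℂ} {ε r : ℝ}

namespace IsResolventAt

theorem exists_eigenvector_of_notMem_presolventSet [CompleteSpace E]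
    (hB : IsResolventAt A 0 B) (hK : IsCompactOperator B) (hlam : lam ∉ presolventSet A) :
    lam ≠ 0 ∧ ∃ x, ‖x‖ = 1 ∧ B x = lam⁻¹ • x := by
  have hlam0 : lam ≠ 0 := by
    rintro rfl
    exact hlam ⟨B, hB⟩
  have hspec : lam⁻¹ ∈ spectrum ℂ B := by
    refine spectrum.mem_iff.2 fun hu => hlam (hB.mem_presolventSet_of_isUnit ?_)
    have : 1 - lam • B = algebraMap ℂ (E →L[ℂ] E) lam * (algebraMap ℂ _ lam⁻¹ - B) := by
      rw [mul_sub, ← map_mul, mul_inv_cancel₀ hlam0, map_one, Algebra.algebraMap_eq_smul_one,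
        smul_one_mul]
    rw [this]
    exact ((isUnit_iff_ne_zero.2 hlam0).map _).mul hu
  obtain ⟨v, hv⟩ :=
    ((hK.hasEigenvalue_iff_mem_spectrum (inv_ne_zero hlam0)).2 hspec).exists_hasEigenvector
  refine ⟨hlam0, (‖v‖⁻¹ : ℂ) • v, norm_smul_inv_norm hv.2, ?_⟩
  rw [map_smul, smul_comm]
  exact congrArg _ hv.apply_eq_smul

theorem one_sub_lt_norm_mul (hB : IsResolventAt A 0 B) (hR : IsResolventAt A lam R)
    (hε : 0 < ε) (hRε : 1 / ε < ‖R‖) : 1 - ‖B‖ * ε < ‖lam‖ * ‖B‖ := by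
  by_contra! h
  have hR0 : 0 < ‖R‖ := (one_div_pos.2 hε).trans hRε
  have hεR : 1 < ε * ‖R‖ := by rwa [div_lt_iff₀ hε, mul_comm] at hRε
  have hle : ‖B‖ * ε * ‖R‖ ≤ ‖B‖ := by
    nlinarith [hB.norm_le_s18 hR, mul_le_mul_of_nonneg_right h hR0.le]
  rcases (norm_nonneg B).eq_or_lt with hB0 | hB0
  · have := hB.norm_le_s18 hR
    rw [← hB0] at this
    linarith [this.trans_eq (show (0 : ℝ) + ‖lam‖ * 0 * ‖R‖ = 0 by ring)]
  · nlinarith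

theorem exists_approx_eigenvector_of_lt_norm (hB : IsResolventAt A 0 B)
    (hR : IsResolventAt A lam R) (hε : 0 < ε) (hBε : ‖B‖ * ε < 1) (hRε : 1 / ε < ‖R‖)
    (hlr : ‖lam‖ ≤ r) :
    lam ≠ 0 ∧ ∃ x z, ‖x‖ = 1 ∧ B z = x ∧ ‖z‖ ≤ r + ε ∧
      ‖B x - lam⁻¹ • x‖ ≤ ‖B‖ ^ 2 * ε / (1 - ‖B‖ * ε) := by
  have hlow := hB.one_sub_lt_norm_mul hR hε hRε
  have hlam0 : lam ≠ 0 := by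
    rintro rfl
    simp only [norm_zero, zero_mul] at hlow
    linarith
  have hden : 0 < 1 - ‖B‖ * ε := by linarith
  obtain ⟨u, hu1, hu2⟩ := R.exists_lt_apply_of_lt_opNorm hRε
  set ζ := R u
  have hεζ : 1 < ε * ‖ζ‖ := by rwa [div_lt_iff₀ hε, mul_comm] at hu2
  have hid : ζ = B u + lam • B ζ := hB.apply_eq_add hR u
  refine ⟨hlam0, exists_norm_eq_one_of_approx_eigenvector (z := u + lam • ζ) (ζ := ζ) ?_ ?_ ?_ ?_⟩
  · rintro hζ
    simp [hζ] at hεζ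
    linarith
  · rw [map_add, map_smul, ← hid]
  · calc ‖u + lam • ζ‖ ≤ ‖u‖ + ‖lam‖ * ‖ζ‖ := (norm_add_le _ _).trans_eq (by rw [norm_smul])
      _ ≤ (r + ε) * ‖ζ‖ := by nlinarith [norm_nonneg ζ]
  · have hζ' : lam⁻¹ • ζ = lam⁻¹ • B u + B ζ := by
      conv_lhs => rw [hid]
      rw [smul_add, inv_smul_smul₀ hlam0]
    have hdiff : B ζ - lam⁻¹ • ζ = -(lam⁻¹ • B u) := by
      rw [hζ']
      abel
    have hlamB : ‖lam‖⁻¹ * ‖B‖ ≤ ‖B‖ ^ 2 / (1 - ‖B‖ * ε) := by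
      rw [inv_mul_eq_div, div_le_div_iff₀ (norm_pos_iff.2 hlam0) hden]
      nlinarith [norm_nonneg B]
    calc ‖B ζ - lam⁻¹ • ζ‖ ≤ ‖lam‖⁻¹ * ‖B‖ := by
          rw [hdiff, norm_neg, norm_smul, norm_inv]
          gcongr
          exact B.unit_le_opNorm u hu1.le
      _ ≤ ‖B‖ ^ 2 / (1 - ‖B‖ * ε) * (ε * ‖ζ‖) :=
          hlamB.trans (le_mul_of_one_le_right (by positivity) hεζ.le)
      _ = ‖B‖ ^ 2 * ε / (1 - ‖B‖ * ε) * ‖ζ‖ := by ring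

theorem exists_approx_eigenvector_of_mem_pseudoSpectrum [CompleteSpace E]
    (hB : IsResolventAt A 0 B) (hK : IsCompactOperator B) (hε : 0 < ε) (hBε : ‖B‖ * ε < 1)
    (hlam : lam ∈ pseudoSpectrum ε A) (hlr : ‖lam‖ ≤ r) :
    lam ≠ 0 ∧ ∃ x z, ‖x‖ = 1 ∧ B z = x ∧ ‖z‖ ≤ r + ε ∧
      ‖B x - lam⁻¹ • x‖ ≤ ‖B‖ ^ 2 * ε / (1 - ‖B‖ * ε) := by
  rcases hlam with hsing | hres
  · obtain ⟨hlam0, x, hx, hBx⟩ := hB.exists_eigenvector_of_notMem_presolventSet hK hsing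
    refine ⟨hlam0, x, lam • x, hx, by rw [map_smul, hBx, smul_inv_smul₀ hlam0], ?_, ?_⟩
    · rw [norm_smul, hx, mul_one]
      linarith
    · rw [hBx, sub_self, norm_zero]
      exact div_nonneg (by positivity) (by linarith)
  · have hmem : lam ∈ presolventSet A := by
      by_contra h
      rw [resolventOf, dif_neg (show ¬∃ R, IsResolventAt A lam R from h), norm_zero] at hres
      linarith [one_div_pos.2 hε]
    exact hB.exists_approx_eigenvector_of_lt_norm (resolventOf_spec hmem) hε hBε hres hlr

end IsResolventAt

end Pseudospectrum

theorem IsIdempotentElem.norm_le_norm_sq {R : Type*} [NonUnitalSeminormedRing R] {p : R}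
    (h : IsIdempotentElem p) : ‖p‖ ≤ ‖p‖ ^ 2 :=
  calc ‖p‖ = ‖p * p‖ := by rw [h.eq]
    _ ≤ ‖p‖ ^ 2 := (norm_mul_le p p).trans_eq (sq _).symm

section Projection

variable {𝕜 E : Type*} [NontriviallyNormedField 𝕜] [NormedAddCommGroup E] [NormedSpace 𝕜 E]
  {U : Submodule 𝕜 E} {P : E →L[𝕜] E}

/-- The operator `A_n⁻¹ P_n` of the paper, as an operator on the whole space. -/
def compProj (hP : ∀ x, P x ∈ U) (T : U →L[𝕜] U) : E →L[𝕜] E :=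
  U.subtypeL.comp (T.comp (P.codRestrict U hP))

variable (hP : ∀ x, P x ∈ U) (T : U →L[𝕜] U)

theorem compProj_apply (x : E) : compProj hP T x = T ⟨P x, hP x⟩ := rfl

theorem compProj_mem (x : E) : compProj hP T x ∈ U := (T _).2

theorem norm_compProj_le : ‖compProj hP T‖ ≤ ‖T‖ * ‖P‖ := by
  refine ContinuousLinearMap.opNorm_le_bound _ (by positivity) fun x => ?_
  calc ‖compProj hP T x‖ = ‖T ⟨P x, hP x⟩‖ := rfl
    _ ≤ ‖T‖ * ‖P x‖ := T.le_opNorm _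
    _ ≤ ‖T‖ * ‖P‖ * ‖x‖ := by
        rw [mul_assoc]
        gcongr
        exact P.le_opNorm x

theorem compProj_apply_of_mem (hPU : ∀ x ∈ U, P x = x) {u : E} (hu : u ∈ U) :
    compProj hP T u = T ⟨u, hu⟩ := by
  simp only [compProj_apply, hPU u hu]

theorem compProj_apply_apply (hPU : ∀ x ∈ U, P x = x) (x : E) :
    compProj hP T (P x) = compProj hP T x :=
  compProj_apply_of_mem hP T hPU (hP x)

theorem norm_le_norm_compProj (hPU : ∀ x ∈ U, P x = x) : ‖T‖ ≤ ‖compProj hP T‖ :=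
  T.opNorm_le_bound (norm_nonneg _) fun u => by
    simpa [compProj_apply_of_mem hP T hPU u.2] using (compProj hP T).le_opNorm u

theorem seven_mul_norm_compProj_le (hPU : ∀ x ∈ U, P x = x) :
    7 * ‖compProj hP T‖ ≤ ‖T‖ * ‖P‖ + 6 * ‖T‖ * ‖P‖ ^ 2 := by
  have h1 := norm_compProj_le hP T
  have h2 : ‖P‖ ≤ ‖P‖ ^ 2 :=
    IsIdempotentElem.norm_le_norm_sq (ContinuousLinearMap.ext fun x => hPU _ (hP x))
  nlinarith [mul_le_mul_of_nonneg_left h2 (norm_nonneg T)]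

end Projection

section ProjectionSequence

variable {𝕜 E : Type*} [NontriviallyNormedField 𝕜] [NormedAddCommGroup E] [NormedSpace 𝕜 E]
  {U : ℕ → Submodule 𝕜 E} {P : ℕ → E →L[𝕜] E} (hP : ∀ n x, P n x ∈ U n)
  (T : ∀ n, U n →L[𝕜] U n) {B : E →L[𝕜] E}

theorem bddAbove_range_norm_mul_add (hPU : ∀ n, ∀ x ∈ U n, P n x = x)
    (hPbdd : ∃ C, ∀ n, ‖P n‖ ≤ C) (hS : Tendsto (fun n => compProj (hP n) (T n)) atTop (𝓝 B)) :
    BddAbove (Set.range fun n => ‖T n‖ * ‖P n‖ + 6 * ‖T n‖ * ‖P n‖ ^ 2) := by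
  obtain ⟨M, hM⟩ := hS.norm.bddAbove_range
  obtain ⟨C, hC⟩ := hPbdd
  have hT (n : ℕ) : ‖T n‖ ≤ M :=
    (norm_le_norm_compProj (hP n) (T n) (hPU n)).trans (hM ⟨n, rfl⟩)
  have hM0 : 0 ≤ M := (norm_nonneg _).trans (hT 0)
  have hC0 : 0 ≤ C := (norm_nonneg _).trans (hC 0)
  refine ⟨M * C + 6 * M * C ^ 2, ?_⟩
  rintro _ ⟨n, rfl⟩
  dsimp only
  gcongr
  exacts [hT n, hC n, hT n, hC n]

theorem seven_mul_norm_le_sSup (hPU : ∀ n, ∀ x ∈ U n, P n x = x)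
    (hPbdd : ∃ C, ∀ n, ‖P n‖ ≤ C) (hS : Tendsto (fun n => compProj (hP n) (T n)) atTop (𝓝 B)) :
    7 * ‖B‖ ≤ sSup (Set.range fun n => ‖T n‖ * ‖P n‖ + 6 * ‖T n‖ * ‖P n‖ ^ 2) :=
  le_of_tendsto' (hS.norm.const_mul 7) fun n =>
    (seven_mul_norm_compProj_le (hP n) (T n) (hPU n)).trans
      (le_csSup (bddAbove_range_norm_mul_add hP T hPU hPbdd hS) ⟨n, rfl⟩)

end ProjectionSequence

section NumericalRange

variable {E : Type*} [NormedAddCommGroup E] [InnerProductSpace ℂ E] {U : Submodule ℂ E}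
  {P : E →L[ℂ] E} (hP : ∀ x, P x ∈ U) (T : U →L[ℂ] U)

theorem inner_compProj_mem_numRangeSub (hPU : ∀ x ∈ U, P x = x) {u : E} (hu : u ∈ U)
    (hu1 : ‖u‖ = 1) : inner ℂ u (compProj hP T u) ∈ numRangeSub T :=
  ⟨⟨u, hu⟩, hu1, by rw [compProj_apply_of_mem hP T hPU hu]⟩

theorem exists_mem_numRangeSub_norm_le (hPU : ∀ x ∈ U, P x = x) (hU : U ≠ ⊥) :
    ∃ v ∈ numRangeSub T, ‖v‖ ≤ ‖compProj hP T‖ := by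
  obtain ⟨u, hu, hu0⟩ := Submodule.exists_mem_ne_zero_of_ne_bot hU
  have hu1 : ‖(‖u‖⁻¹ : ℂ) • u‖ = 1 := norm_smul_inv_norm hu0
  exact ⟨_, inner_compProj_mem_numRangeSub hP T hPU (U.smul_mem _ hu) hu1,
    norm_inner_apply_le _ hu1⟩

theorem exists_mem_numRangeSub_norm_inner_sub_le (hPU : ∀ x ∈ U, P x = x) {x : E}
    (hx : ‖x‖ = 1) (hPx : P x ≠ 0) :
    ∃ v ∈ numRangeSub T,
      ‖inner ℂ x (compProj hP T x) - v‖ ≤ ‖x - P x‖ * (‖T‖ * ‖P‖ * (2 * ‖P‖ + 1)) := by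
  have hq1 : ‖(‖P x‖⁻¹ : ℂ) • P x‖ = 1 := norm_smul_inv_norm hPx
  refine ⟨_, inner_compProj_mem_numRangeSub hP T hPU (U.smul_mem _ (hP x)) hq1, ?_⟩
  have hqP : ‖P x‖ ≤ ‖P‖ := P.unit_le_opNorm x hx.le
  rw [← compProj_apply_apply hP T hPU]
  refine (norm_inner_sub_inner_smul_inv_norm_le _ hx hPx).trans ?_
  calc ‖compProj hP T‖ * ‖x - P x‖ * (2 * ‖P x‖ + 1)
      ≤ ‖T‖ * ‖P‖ * ‖x - P x‖ * (2 * ‖P‖ + 1) := by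
        gcongr
        exact norm_compProj_le hP T
    _ = ‖x - P x‖ * (‖T‖ * ‖P‖ * (2 * ‖P‖ + 1)) := by ring

theorem exists_mem_numRangeSub_dist_lt (hPU : ∀ x ∈ U, P x = x) {B : E →L[ℂ] E} {x : E}
    (hx : ‖x‖ = 1) {μ : ℂ} {η t C δ : ℝ} (hxμ : ‖B x - μ • x‖ ≤ η) (hxP : ‖x - P x‖ ≤ t)
    (hC : ‖T‖ * ‖P‖ * (2 * ‖P‖ + 1) ≤ C) (hBC : 2 * ‖B‖ ≤ C)
    (hδ : ‖B - compProj hP T‖ + t * C < δ - η) (hδB : δ ≤ η + ‖B‖ + C) :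
    ∃ v ∈ numRangeSub T, dist μ v < δ := by
  set S := compProj hP T
  have hμ : ‖inner ℂ x (B x) - μ‖ ≤ η := (norm_inner_apply_sub_le hx μ).trans hxμ
  have hBS : ‖inner ℂ x (B x) - inner ℂ x (S x)‖ ≤ ‖B - S‖ := by
    rw [← inner_sub_right]
    exact norm_inner_apply_le (B - S) hx
  by_cases hPx : P x = 0
  · -- Here `t ≥ 1`, so the budget `t * C ≥ 2‖B‖` absorbs any point of `W(T)`.
    have ht1 : 1 ≤ t := by simpa [hPx, hx] using hxP
    have htC : C ≤ t * C := le_mul_of_one_le_left (by linarith [norm_nonneg B]) ht1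
    have hU : U ≠ ⊥ := by
      rintro rfl
      have hS : S = 0 := ContinuousLinearMap.ext fun y => by simpa using compProj_mem hP T y
      rw [hS, sub_zero] at hδ
      linarith
    obtain ⟨v, hv, hvS⟩ := exists_mem_numRangeSub_norm_le hP T hPU hU
    have hμB : ‖μ‖ ≤ ‖B‖ + η := by
      linarith [norm_inner_apply_le B hx, norm_sub_norm_le μ (inner ℂ x (B x)),
        norm_sub_rev (inner ℂ x (B x)) μ]
    have hSB : ‖S‖ ≤ ‖B‖ + ‖B - S‖ := by simpa using norm_sub_le B (B - S)
    refine ⟨v, hv, ?_⟩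
    calc dist μ v ≤ ‖μ‖ + ‖v‖ := (dist_eq_norm μ v).trans_le (norm_sub_le μ v)
      _ ≤ (‖B‖ + η) + (‖B‖ + ‖B - S‖) := add_le_add hμB (hvS.trans hSB)
      _ < δ := by linarith
  · obtain ⟨v, hv, hvx⟩ := exists_mem_numRangeSub_norm_inner_sub_le hP T hPU hx hPx
    have htC : ‖x - P x‖ * (‖T‖ * ‖P‖ * (2 * ‖P‖ + 1)) ≤ t * C :=
      mul_le_mul hxP hC (by positivity) ((norm_nonneg _).trans hxP)
    refine ⟨v, hv, ?_⟩
    calc dist μ v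
        = ‖(μ - inner ℂ x (B x)) + (inner ℂ x (B x) - inner ℂ x (S x)) +
            (inner ℂ x (S x) - v)‖ := by rw [dist_eq_norm]; congr 1; ring
      _ ≤ η + ‖B - S‖ + t * C :=
        norm_add₃_le.trans (add_le_add_three (by rwa [norm_sub_rev]) hBS (hvx.trans htC))
      _ < δ := by linarith

end NumericalRange

theorem pseudospectrum_inter_ball_subset_inv_nbhd_of_uniform_general
    (A : H →ₗ.[ℂ] H)
    (h0 : (0 : ℂ) ∈ presolventSet A)
    {W : Type*} [NormedAddCommGroup W] [InnerProductSpace ℂ W]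
    (ι : W →L[ℂ] H)
    (U : ℕ → Submodule ℂ H) (hUfin : ∀ n, FiniteDimensional ℂ (U n))
    (P : ℕ → H →L[ℂ] H)
    (hPmem : ∀ n x, P n x ∈ U n)
    (hPproj : ∀ n, ∀ x ∈ U n, P n x = x)
    (hPbdd : ∃ C : ℝ, ∀ n, ‖P n‖ ≤ C)
    (Tinv : ∀ n, ↥(U n) →L[ℂ] ↥(U n))
    (hunif : Tendsto (fun n =>
      ‖resolventOf A 0 -
        (U n).subtypeL.comp ((Tinv n).comp ((P n).codRestrict (U n) (hPmem n)))‖)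
      atTop (𝓝 0))
    (Binv : H →L[ℂ] W) (hBinv : ∀ x, ι (Binv x) = resolventOf A 0 x)
    (C₀ : ℝ)
    (hC₀ : C₀ = sSup (Set.range fun n =>
      ‖Tinv n‖ * ‖P n‖ + 6 * ‖Tinv n‖ * ‖P n‖ ^ 2))
    (r : ℝ)
    (ε : ℝ) (hε0 : 0 < ε) (hε : ε < 1 / ‖resolventOf A 0‖)
    (δ : ℝ)
    (hδ2 : δ ≤ ‖resolventOf A 0‖ ^ 2 * ε / (1 - ‖resolventOf A 0‖ * ε) +
      7 / 2 * ‖resolventOf A 0‖)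
    (n₀ : ℕ)
    (hn₀ : ∀ n ≥ n₀,
      ‖resolventOf A 0 -
          (U n).subtypeL.comp
            ((Tinv n).comp ((P n).codRestrict (U n) (hPmem n)))‖ +
        (r + ε) * ‖Binv‖ * C₀ * ‖ι - (P n).comp ι‖ <
        δ - ‖resolventOf A 0‖ ^ 2 * ε / (1 - ‖resolventOf A 0‖ * ε)) :
    ∀ n ≥ n₀,
      pseudoSpectrum ε A ∩ Metric.closedBall 0 r ⊆
        invSet (nbhdSet δ (numRangeSub (Tinv n))) := by
  intro n hn lam ⟨hlam, hlr⟩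
  set B := resolventOf A 0
  have hB : IsResolventAt A 0 B := resolventOf_spec h0
  have hS : Tendsto (fun m => compProj (hPmem m) (Tinv m)) atTop (𝓝 B) :=
    tendsto_iff_norm_sub_tendsto_zero.2 (hunif.congr fun m => norm_sub_rev _ _)
  have hK : IsCompactOperator B := isCompactOperator_of_tendsto hS <| .of_forall fun m =>
    have := hUfin m
    (compProj (hPmem m) (Tinv m)).isCompactOperator_of_mem_finiteDimensional (compProj_mem _ _)
  have hB0 : 0 < ‖B‖ := one_div_pos.1 (hε0.trans hε)
  have hBε : ‖B‖ * ε < 1 := by rwa [lt_div_iff₀ hB0, mul_comm] at hε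
  obtain ⟨hlam0, x, z, hx, rfl, hzr, hxμ⟩ := hB.exists_approx_eigenvector_of_mem_pseudoSpectrum
    hK hε0 hBε hlam (mem_closedBall_zero_iff.1 hlr)
  have hxP : ‖B z - P n (B z)‖ ≤ (r + ε) * ‖Binv‖ * ‖ι - (P n).comp ι‖ := by
    rw [← hBinv]
    calc ‖ι (Binv z) - P n (ι (Binv z))‖ ≤ ‖ι - (P n).comp ι‖ * (‖Binv‖ * ‖z‖) :=
          (ι - (P n).comp ι).le_opNorm (Binv z) |>.trans (by gcongr; exact Binv.le_opNorm z)
      _ ≤ ‖ι - (P n).comp ι‖ * (‖Binv‖ * (r + ε)) := by gcongr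
      _ = (r + ε) * ‖Binv‖ * ‖ι - (P n).comp ι‖ := by ring
  have hC : ‖Tinv n‖ * ‖P n‖ * (2 * ‖P n‖ + 1) ≤ C₀ := by
    rw [hC₀]
    refine le_trans ?_ (le_csSup (bddAbove_range_norm_mul_add hPmem Tinv hPproj hPbdd hS) ⟨n, rfl⟩)
    dsimp only
    nlinarith [mul_nonneg (norm_nonneg (Tinv n)) (sq_nonneg ‖P n‖)]
  have h7 : 7 * ‖B‖ ≤ C₀ := hC₀ ▸ seven_mul_norm_le_sSup hPmem Tinv hPproj hPbdd hS
  have hkey : ‖B - compProj (hPmem n) (Tinv n)‖ + (r + ε) * ‖Binv‖ * C₀ * ‖ι - (P n).comp ι‖ <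
      δ - ‖B‖ ^ 2 * ε / (1 - ‖B‖ * ε) := hn₀ n hn
  obtain ⟨v, hv, hvd⟩ := exists_mem_numRangeSub_dist_lt (hPmem n) (Tinv n) (hPproj n) (δ := δ)
    hx hxμ hxP hC (by linarith) (by linarith) (by linarith)
  exact ⟨lam⁻¹, ⟨v, hv, hvd⟩, inv_ne_zero hlam0, (inv_inv lam).symm⟩

/-- Proposition 4.9. -/
theorem pseudospectrum_inter_ball_subset_inv_nbhd_of_uniform
    (A : H →ₗ.[ℂ] H)
    (hclosed : IsClosed (A.graph : Set (H × H)))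
    (hdense : Dense (A.domain : Set H))
    (h0 : (0 : ℂ) ∈ presolventSet A)
    {W : Type*} [NormedAddCommGroup W] [InnerProductSpace ℂ W] [CompleteSpace W]
    (ι : W →L[ℂ] H) (hιinj : Function.Injective ι) (hιdense : DenseRange ι)
    (hdom : (A.domain : Set H) ⊆ Set.range ι)
    (U : ℕ → Submodule ℂ H) (hUfin : ∀ n, FiniteDimensional ℂ (U n))
    (P : ℕ → H →L[ℂ] H)
    (hPmem : ∀ n x, P n x ∈ U n)
    (hPproj : ∀ n, ∀ x ∈ U n, P n x = x)
    (hPbdd : ∃ C : ℝ, ∀ n, ‖P n‖ ≤ C)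
    (hPW : Tendsto (fun n => ‖ι - (P n).comp ι‖) atTop (𝓝 0))
    (T : ∀ n, ↥(U n) →L[ℂ] ↥(U n)) (Tinv : ∀ n, ↥(U n) →L[ℂ] ↥(U n))
    (hTinv : ∀ n, (∀ u, Tinv n (T n u) = u) ∧ ∀ u, T n (Tinv n u) = u)
    (hunif : Tendsto (fun n =>
      ‖resolventOf A 0 -
        (U n).subtypeL.comp ((Tinv n).comp ((P n).codRestrict (U n) (hPmem n)))‖)
      atTop (𝓝 0))
    (Binv : H →L[ℂ] W) (hBinv : ∀ x, ι (Binv x) = resolventOf A 0 x)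
    (C₀ : ℝ)
    (hC₀ : C₀ = sSup (Set.range fun n =>
      ‖Tinv n‖ * ‖P n‖ + 6 * ‖Tinv n‖ * ‖P n‖ ^ 2))
    (r : ℝ) (hr : 0 < r)
    (ε : ℝ) (hε0 : 0 < ε) (hε : ε < 1 / ‖resolventOf A 0‖)
    (δ : ℝ)
    (hδ1 : ‖resolventOf A 0‖ ^ 2 * ε / (1 - ‖resolventOf A 0‖ * ε) < δ)
    (hδ2 : δ ≤ ‖resolventOf A 0‖ ^ 2 * ε / (1 - ‖resolventOf A 0‖ * ε) +
      7 / 2 * ‖resolventOf A 0‖)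
    (n₀ : ℕ)
    (hn₀ : ∀ n ≥ n₀,
      ‖resolventOf A 0 -
          (U n).subtypeL.comp
            ((Tinv n).comp ((P n).codRestrict (U n) (hPmem n)))‖ +
        (r + ε) * ‖Binv‖ * C₀ * ‖ι - (P n).comp ι‖ <
        δ - ‖resolventOf A 0‖ ^ 2 * ε / (1 - ‖resolventOf A 0‖ * ε)) :
    ∀ n ≥ n₀,
      pseudoSpectrum ε A ∩ Metric.closedBall 0 r ⊆
        invSet (nbhdSet δ (numRangeSub (Tinv n))) :=
  pseudospectrum_inter_ball_subset_inv_nbhd_of_uniform_general A h0 ι U hUfin P hPmem hPproj hPbdd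
    Tinv hunif Binv hBinv C₀ hC₀ r ε hε0 hε δ hδ2 n₀ hn₀
end
end
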